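/- The n-th linear polarization constant of ℓ_∞^d(ℂ) satisfies c_n(ℓ_∞^d(ℂ)) ≥ (1/2)·√(d^n/(24n)^d). -/

import Mathlib

/-- The supremum norm over the unit ball of the pointwise product of finitely many
continuous linear functionals. -/
noncomputable def prodSupNorm {𝕜 X : Type*} [RCLike 𝕜] [NormedAddCommGroup X]
    [NormedSpace 𝕜 X] {n : ℕ} (ψ : Fin n → (X →L[𝕜] 𝕜)) : ℝ :=
  sSup {r : ℝ | ∃ x : X, ‖x‖ ≤ 1 ∧ r = ‖∏ j, ψ j x‖}

/-- The n-th linear polarization constant of a normed space `X`. -/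
noncomputable def polarizationConstant (𝕜 : Type*) (X : Type*) [RCLike 𝕜]
    [NormedAddCommGroup X] [NormedSpace 𝕜 X] (n : ℕ) : ℝ :=
  sInf {c : ℝ | 0 ≤ c ∧ ∀ ψ : Fin n → (X →L[𝕜] 𝕜), (∏ j, ‖ψ j‖) ≤ c * prodSupNorm ψ}

/-!
Choose signs `ε j k = ±1` and let `ψ j = ∑ k, ε j k • e_k*`, so that `‖ψ j‖ = d`. Expanding,
`∏ j, ψ j x = ∑ α, c_α(ε) x^α` over the at most `(n + 1) ^ d` exponents `α`, hence on the unit ball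
`|∏ j, ψ j x| ≤ ∑ α, |c_α| ≤ √((n + 1) ^ d * ∑ α, c_α ^ 2)`. Each `c_α(ε)` is a sum of the Walsh
characters `∏ j, ε j (f j)` over the maps `f` with exponent `α`; these characters are orthogonal, so
the average of `∑ α, c_α ^ 2` over all sign patterns is `d ^ n` and some pattern does no worse.
This gives `c_n ≥ d ^ n / √((n + 1) ^ d * d ^ n) = √(d ^ n / (n + 1) ^ d)`, and `n + 1 ≤ 24 n`.
-/

open Finset

section

variable {𝕜 X : Type*} [RCLike 𝕜] [NormedAddCommGroup X] [NormedSpace 𝕜 X] {n : ℕ}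

lemma prodSupNorm_eq_sSup_image (ψ : Fin n → (X →L[𝕜] 𝕜)) :
    prodSupNorm ψ = sSup ((fun x => ‖∏ j, ψ j x‖) '' Metric.closedBall 0 1) := by
  simp only [prodSupNorm, Set.image, Metric.mem_closedBall, dist_zero_right, eq_comm]

lemma bddAbove_norm_prod_apply (ψ : Fin n → (X →L[𝕜] 𝕜)) :
    BddAbove {r : ℝ | ∃ x : X, ‖x‖ ≤ 1 ∧ r = ‖∏ j, ψ j x‖} := by
  refine ⟨∏ j, ‖ψ j‖, ?_⟩
  rintro _ ⟨x, hx, rfl⟩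
  rw [norm_prod]
  gcongr with j
  exact (ψ j).unit_le_opNorm x hx

lemma norm_prod_apply_le_prodSupNorm (ψ : Fin n → (X →L[𝕜] 𝕜)) {x : X} (hx : ‖x‖ ≤ 1) :
    ‖∏ j, ψ j x‖ ≤ prodSupNorm ψ :=
  le_csSup (bddAbove_norm_prod_apply ψ) ⟨x, hx, rfl⟩

lemma prodSupNorm_le (ψ : Fin n → (X →L[𝕜] 𝕜)) {B : ℝ} (hB : 0 ≤ B)
    (h : ∀ x : X, ‖x‖ ≤ 1 → ‖∏ j, ψ j x‖ ≤ B) : prodSupNorm ψ ≤ B :=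
  Real.sSup_le (by rintro _ ⟨x, hx, rfl⟩; exact h x hx) hB

lemma prodSupNorm_nonneg (ψ : Fin n → (X →L[𝕜] 𝕜)) : 0 ≤ prodSupNorm ψ :=
  (norm_nonneg _).trans (norm_prod_apply_le_prodSupNorm ψ (x := 0) (by simp))

lemma prodSupNorm_smul_le (c : Fin n → 𝕜) (ψ : Fin n → (X →L[𝕜] 𝕜)) :
    prodSupNorm (fun j => c j • ψ j) ≤ (∏ j, ‖c j‖) * prodSupNorm ψ := by
  refine prodSupNorm_le _ (by positivity [prodSupNorm_nonneg ψ]) fun x hx => ?_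
  have hsplit : ‖∏ j, (c j • ψ j) x‖ = (∏ j, ‖c j‖) * ‖∏ j, ψ j x‖ := by
    simp only [FunLike.coe_smul, Pi.smul_apply, smul_eq_mul, prod_mul_distrib,
      norm_mul, norm_prod]
  rw [hsplit]
  gcongr
  exact norm_prod_apply_le_prodSupNorm ψ hx

lemma prodSupNorm_pos {g : Fin n → (X →L[𝕜] 𝕜)} (hg : ∀ j, g j ≠ 0) : 0 < prodSupNorm g := by
  obtain ⟨x, hx⟩ : ∃ x : X, ∀ j, g j x ≠ 0 := by
    by_contra! hcover
    obtain ⟨j, hj⟩ := Subspace.exists_eq_top_of_iUnion_eq_univ (k := 𝕜)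
      (p := fun j => LinearMap.ker (g j : X →ₗ[𝕜] 𝕜)) (Set.iUnion_eq_univ_iff.mpr hcover)
    exact hg j (ContinuousLinearMap.coe_injective (LinearMap.ker_eq_top.mp hj))
  obtain ⟨y, hy, hgy⟩ : ∃ y : X, ‖y‖ ≤ 1 ∧ ∀ j, g j y ≠ 0 := by
    rcases eq_or_ne x 0 with rfl | hx0
    · exact ⟨0, by simp, hx⟩
    · refine ⟨(‖x‖⁻¹ : 𝕜) • x, (norm_smul_inv_norm hx0).le, fun j => ?_⟩
      simp [hx0, hx j]
  exact (norm_pos_iff.mpr (prod_ne_zero_iff.mpr fun j _ => hgy j)).trans_le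
    (norm_prod_apply_le_prodSupNorm g hy)

lemma continuous_prodSupNorm [FiniteDimensional 𝕜 X] :
    Continuous (prodSupNorm : (Fin n → (X →L[𝕜] 𝕜)) → ℝ) := by
  have := FiniteDimensional.proper_rclike 𝕜 X
  simp_rw [funext prodSupNorm_eq_sSup_image]
  exact (ProperSpace.isCompact_closedBall 0 1).continuous_sSup (by fun_prop)

-- Without this, `polarizationConstant` could be the junk value `sInf ∅ = 0`.
lemma exists_prod_norm_le_mul_prodSupNorm [FiniteDimensional 𝕜 X] :
    ∃ c : ℝ, 0 ≤ c ∧ ∀ ψ : Fin n → (X →L[𝕜] 𝕜), ∏ j, ‖ψ j‖ ≤ c * prodSupNorm ψ := by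
  have := FiniteDimensional.proper_rclike 𝕜 (X →L[𝕜] 𝕜)
  obtain ⟨m, hm, hmin⟩ := (isCompact_univ_pi fun _ => isCompact_sphere (0 : X →L[𝕜] 𝕜) 1)
    |>.exists_forall_le' continuous_prodSupNorm.continuousOn (a := 0)
      fun g hg => prodSupNorm_pos fun j => ne_zero_of_mem_unit_sphere ⟨g j, hg j trivial⟩
  refine ⟨m⁻¹, by positivity, fun ψ => ?_⟩
  by_cases hψ : ∃ j, ψ j = 0
  · obtain ⟨j, hj⟩ := hψ
    rw [prod_eq_zero (mem_univ j) (by simp [hj])]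
    exact mul_nonneg (by positivity) (prodSupNorm_nonneg ψ)
  · replace hψ : ∀ j, ψ j ≠ 0 := not_exists.mp hψ
    have hpos : 0 < ∏ j, ‖ψ j‖ := prod_pos fun j _ => norm_pos_iff.mpr (hψ j)
    have hnormalized := (hmin (fun j => (‖ψ j‖⁻¹ : 𝕜) • ψ j)
      fun j _ => by simp [norm_smul_inv_norm (hψ j)]).trans (prodSupNorm_smul_le _ ψ)
    simp only [norm_inv, RCLike.norm_ofReal, abs_norm, prod_inv_distrib] at hnormalized
    rw [le_inv_mul_iff₀ hpos] at hnormalized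
    rw [le_inv_mul_iff₀ hm]
    linarith

lemma div_le_polarizationConstant [FiniteDimensional 𝕜 X] (ψ : Fin n → (X →L[𝕜] 𝕜)) {M : ℝ}
    (hM : 0 < M) (hψ : prodSupNorm ψ ≤ M) :
    (∏ j, ‖ψ j‖) / M ≤ polarizationConstant 𝕜 X n :=
  le_csInf exists_prod_norm_le_mul_prodSupNorm fun _ ⟨hc, hcψ⟩ =>
    (div_le_iff₀ hM).mpr ((hcψ ψ).trans (mul_le_mul_of_nonneg_left hψ hc))

end

section

variable {ι κ : Type*} [Fintype ι] [Fintype κ]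

def boolSign (b : Bool) : ℝ := if b then 1 else -1

@[simp] lemma boolSign_mul_self (b : Bool) : boolSign b * boolSign b = 1 := by
  cases b <;> norm_num [boolSign]

@[simp] lemma abs_boolSign (b : Bool) : |boolSign b| = 1 := by
  cases b <;> norm_num [boolSign]

@[simp] lemma boolSign_not (b : Bool) : boolSign (!b) = -boolSign b := by
  cases b <;> norm_num [boolSign]

lemma sum_boolSign_mul_boolSign [DecidableEq κ] (a b : κ) :
    ∑ r : κ → Bool, boolSign (r a) * boolSign (r b) =
      if a = b then 2 ^ Fintype.card κ else 0 := by
  split_ifs with hab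
  · simp [hab]
  · -- flipping the sign at `a` negates every term
    have hflip : Function.Involutive fun r : κ → Bool => Function.update r a (!r a) := by
      intro r
      simp
    have := (Equiv.sum_comp hflip.toPerm fun r => boolSign (r a) * boolSign (r b)).symm
    simp only [Function.Involutive.coe_toPerm, Function.update_self, boolSign_not,
      Function.update_of_ne (Ne.symm hab), neg_mul, sum_neg_distrib] at this
    linarith

def signWeight (ε : ι → κ → Bool) (f : ι → κ) : ℝ := ∏ i, boolSign (ε i (f i))

lemma sum_signWeight_mul_signWeight [DecidableEq ι] [DecidableEq κ] (f g : ι → κ) :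
    ∑ ε : ι → κ → Bool, signWeight ε f * signWeight ε g =
      if f = g then (2 ^ Fintype.card κ) ^ Fintype.card ι else 0 := by
  simp_rw [signWeight, ← prod_mul_distrib]
  rw [← Fintype.prod_sum fun i (r : κ → Bool) => boolSign (r (f i)) * boolSign (r (g i))]
  simp_rw [sum_boolSign_mul_boolSign, Fintype.prod_ite_zero, funext_iff, prod_const, card_univ]

lemma sum_sum_sq_sum_signWeight_fiber [DecidableEq ι] [DecidableEq κ] {A : Type*} [Fintype A]
    [DecidableEq A] (π : (ι → κ) → A) :
    ∑ ε : ι → κ → Bool, ∑ a, (∑ f with π f = a, signWeight ε f) ^ 2 =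
      (2 ^ Fintype.card κ) ^ Fintype.card ι * Fintype.card κ ^ Fintype.card ι := by
  calc ∑ ε : ι → κ → Bool, ∑ a, (∑ f with π f = a, signWeight ε f) ^ 2
      = ∑ a, ∑ f with π f = a, ∑ g with π g = a,
          ∑ ε : ι → κ → Bool, signWeight ε f * signWeight ε g := by
        simp_rw [sq, sum_mul_sum]
        rw [sum_comm]
        refine sum_congr rfl fun a _ => ?_
        rw [sum_comm]
        exact sum_congr rfl fun f _ => sum_comm
    _ = ∑ a, ∑ f with π f = a, ((2 : ℝ) ^ Fintype.card κ) ^ Fintype.card ι := by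
        refine sum_congr rfl fun a _ => sum_congr rfl fun f hf => ?_
        simp_rw [sum_signWeight_mul_signWeight, sum_ite_eq, hf, if_true]
    _ = _ := by
        rw [sum_fiberwise, sum_const, card_univ, Fintype.card_fun, nsmul_eq_mul]
        push_cast
        ring

lemma exists_sum_sq_sum_signWeight_fiber_le [DecidableEq ι] {A : Type*} [Fintype A]
    [DecidableEq A] (π : (ι → κ) → A) :
    ∃ ε : ι → κ → Bool,
      ∑ a, (∑ f with π f = a, signWeight ε f) ^ 2 ≤ Fintype.card κ ^ Fintype.card ι := by
  classical
  have htotal : ∑ ε : ι → κ → Bool, ∑ a, (∑ f with π f = a, signWeight ε f) ^ 2 =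
      ∑ _ε : ι → κ → Bool, (Fintype.card κ : ℝ) ^ Fintype.card ι := by
    simp only [sum_sum_sq_sum_signWeight_fiber, sum_const, card_univ, Fintype.card_fun,
      Fintype.card_bool, nsmul_eq_mul]
    push_cast
    ring
  obtain ⟨ε, -, hε⟩ := exists_le_of_sum_le univ_nonempty htotal.le
  exact ⟨ε, hε⟩

end

section

variable {ι κ : Type*} [Fintype ι] [Fintype κ] {𝕜 : Type*} [RCLike 𝕜]

noncomputable def signFunctional (r : κ → Bool) : (κ → 𝕜) →L[𝕜] 𝕜 :=
  ∑ k, (boolSign (r k) : 𝕜) • ContinuousLinearMap.proj k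

lemma signFunctional_apply (r : κ → Bool) (x : κ → 𝕜) :
    signFunctional r x = ∑ k, (boolSign (r k) : 𝕜) * x k := by
  simp [signFunctional]

lemma card_le_norm_signFunctional (r : κ → Bool) :
    (Fintype.card κ : ℝ) ≤ ‖signFunctional (𝕜 := 𝕜) r‖ := by
  let x : κ → 𝕜 := fun k => (boolSign (r k) : 𝕜)
  have hx : ‖x‖ ≤ 1 := pi_norm_le_iff_of_nonneg zero_le_one |>.mpr fun k => by simp [x]
  have hrx : signFunctional r x = Fintype.card κ := by
    simp [x, signFunctional_apply, ← RCLike.ofReal_mul]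
  simpa [hrx] using (signFunctional (𝕜 := 𝕜) r).unit_le_opNorm x hx

variable [DecidableEq κ]

-- Exponents live in `Fin (card ι + 1)`, so there are `(card ι + 1) ^ card κ` monomials.
def monomialExponent (f : ι → κ) (k : κ) : Fin (Fintype.card ι + 1) :=
  ⟨#{i | f i = k}, Nat.lt_succ_of_le (card_le_univ _)⟩

lemma prod_comp_eq_prod_pow_monomialExponent {M : Type*} [CommMonoid M] (f : ι → κ)
    (x : κ → M) : ∏ i, x (f i) = ∏ k, x k ^ (monomialExponent f k : ℕ) := by
  rw [← prod_fiberwise' univ f x]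
  simp [monomialExponent]

def signCoeff [DecidableEq ι] (ε : ι → κ → Bool) (α : κ → Fin (Fintype.card ι + 1)) : ℝ :=
  ∑ f with monomialExponent f = α, signWeight ε f

lemma prod_signFunctional_apply [DecidableEq ι] (ε : ι → κ → Bool) (x : κ → 𝕜) :
    ∏ i, signFunctional (ε i) x =
      ∑ α, (signCoeff ε α : 𝕜) * ∏ k, x k ^ (α k : ℕ) := by
  simp_rw [signFunctional_apply, Fintype.prod_sum, prod_mul_distrib,
    prod_comp_eq_prod_pow_monomialExponent _ x]
  rw [← sum_fiberwise univ monomialExponent]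
  refine sum_congr rfl fun α _ => ?_
  rw [signCoeff, RCLike.ofReal_sum, sum_mul]
  refine sum_congr rfl fun f hf => ?_
  rw [(mem_filter.mp hf).2, signWeight, RCLike.ofReal_prod]

lemma norm_prod_signFunctional_apply_le [DecidableEq ι] (ε : ι → κ → Bool) {x : κ → 𝕜}
    (hx : ‖x‖ ≤ 1) :
    ‖∏ i, signFunctional (ε i) x‖ ≤ ∑ α, |signCoeff ε α| := by
  rw [prod_signFunctional_apply]
  refine (norm_sum_le _ _).trans (sum_le_sum fun α _ => ?_)
  rw [norm_mul, RCLike.norm_ofReal, norm_prod]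
  refine mul_le_of_le_one_right (abs_nonneg _)
    (prod_le_one (fun _ _ => norm_nonneg _) fun k _ => ?_)
  exact (norm_pow _ _).trans_le (pow_le_one₀ (norm_nonneg _) ((norm_le_pi_norm x k).trans hx))

theorem exists_prodSupNorm_signFunctional_le (n : ℕ) :
    ∃ ε : Fin n → κ → Bool, prodSupNorm (fun j => signFunctional (𝕜 := 𝕜) (ε j)) ≤
      √(((n : ℝ) + 1) ^ Fintype.card κ * Fintype.card κ ^ n) := by
  obtain ⟨ε, hε⟩ := exists_sum_sq_sum_signWeight_fiber_le (ι := Fin n) (κ := κ) monomialExponent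
  refine ⟨ε, prodSupNorm_le _ (Real.sqrt_nonneg _) fun x hx =>
    (norm_prod_signFunctional_apply_le ε hx).trans ?_⟩
  rw [Real.le_sqrt (by positivity) (by positivity)]
  calc (∑ α, |signCoeff ε α|) ^ 2 ≤ #univ * ∑ α, |signCoeff ε α| ^ 2 :=
        sq_sum_le_card_mul_sum_sq
    _ ≤ ((n : ℝ) + 1) ^ Fintype.card κ * Fintype.card κ ^ n := by
      simp only [sq_abs, card_univ, Fintype.card_fun, Fintype.card_fin] at hε ⊢
      push_cast
      gcongr
      exact hε

end

/-- The n-th linear polarization constant of ℓ_∞^d(ℂ) satisfies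
c_n(ℓ_∞^d(ℂ)) ≥ (1/2)·√(d^n/(24n)^d). -/
theorem polarizationConstant_linf_lower_bound (n d : ℕ) (hn : 1 ≤ n) (hd : 1 ≤ d) :
    (1 / 2) * Real.sqrt ((d : ℝ) ^ n / (24 * n : ℝ) ^ d)
      ≤ polarizationConstant ℂ (Fin d → ℂ) n := by
  obtain ⟨ε, hε⟩ := exists_prodSupNorm_signFunctional_le (κ := Fin d) (𝕜 := ℂ) n
  rw [Fintype.card_fin] at hε
  have hnorm : (d : ℝ) ^ n ≤ ∏ j, ‖signFunctional (𝕜 := ℂ) (ε j)‖ := by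
    simpa using prod_le_prod (s := univ) (fun _ _ => by positivity) fun j _ =>
      card_le_norm_signFunctional (𝕜 := ℂ) (ε j)
  have hA : (0 : ℝ) < d ^ n := pow_pos (by exact_mod_cast hd) n
  have hC : (0 : ℝ) < (n + 1) ^ d := by positivity
  have hnB : (n : ℝ) + 1 ≤ 24 * n := by
    have : (1 : ℝ) ≤ n := by exact_mod_cast hn
    linarith
  calc (1 / 2) * √((d : ℝ) ^ n / (24 * n) ^ d)
      ≤ √((d : ℝ) ^ n / (24 * n) ^ d) := by
        linarith [Real.sqrt_nonneg ((d : ℝ) ^ n / (24 * n) ^ d)]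
    _ ≤ √((d : ℝ) ^ n / (n + 1) ^ d) :=
        Real.sqrt_le_sqrt (div_le_div_of_nonneg_left hA.le hC (by gcongr))
    _ = d ^ n / √((n + 1) ^ d * d ^ n) := by
        rw [eq_div_iff (by positivity), ← Real.sqrt_mul (by positivity),
          show (d : ℝ) ^ n / (n + 1) ^ d * ((n + 1) ^ d * d ^ n) = d ^ n * d ^ n by field_simp,
          Real.sqrt_mul_self hA.le]
    _ ≤ (∏ j, ‖signFunctional (𝕜 := ℂ) (ε j)‖) / √((n + 1) ^ d * d ^ n) := by gcongr
    _ ≤ polarizationConstant ℂ (Fin d → ℂ) n :=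
        div_le_polarizationConstant _ (by positivity) hε
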